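/- arXiv:2510.14430 — 6 statements merged into one kernel-verified Lean document; each statement's English description precedes it below -/
import Mathlib

section
/- Let λ₁ > λ₂ > ... > λ_m > 0 be distinct positive reals, Λ = diag(λ), V the m×n Vandermonde matrix with columns 𝟙, Λ𝟙, ..., Λ^{n-1}𝟙, and τ ⊆ {1,...,m} a subset of size n with selection matrix S_τ. Then the matrix S_τᵀ Λ V is invertible, and the vector ω = Λ V (S_τᵀ Λ V)⁻¹ 𝟙 satisfies ω_i = 1 - ∏_{j ∈ τ} (1 - λ_i/λ_j) for every i = 1,...,m. -/
/-!
Writing `x_a = λ_{τ(a)}`, the matrix `S_τᵀ Λ V` is `diag(x) · Vandermonde(x)`, invertible because the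
`x_a` are distinct and nonzero. If `c` solves `S_τᵀ Λ V c = 𝟙`, then `p(y) = ∑_b c_b y^{b+1}` is a
polynomial of degree at most `n` with `p(0) = 0` and `p(x_a) = 1`; so is `1 - ∏_a (1 - y / x_a)`, and two
such polynomials agree at `n + 1` points, hence coincide. Evaluating at `y = λ_i` gives `ω_i`.
-/

open Finset Matrix

/-- The n×n matrix `S_τᵀ Λ V` obtained by selecting the rows of `Λ V` indexed
by the size-`n` subset `τ`; its `(a,b)` entry is `λ_{τ(a)}^{b+1}`. -/
noncomputable def selLV {m : ℕ} (l : Fin m → ℝ) (n : ℕ) (τ : Finset (Fin m))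
    (h : τ.card = n) : Matrix (Fin n) (Fin n) ℝ :=
  Matrix.of fun a b => l (τ.orderEmbOfFin h a) ^ ((b : ℕ) + 1)

open Polynomial

theorem selLV_eq_diagonal_mul_vandermonde {m : ℕ} (l : Fin m → ℝ) (n : ℕ)
    (τ : Finset (Fin m)) (h : τ.card = n) :
    selLV l n τ h = diagonal (l ∘ τ.orderEmbOfFin h) * vandermonde (l ∘ τ.orderEmbOfFin h) := by
  ext a b
  simp [selLV, vandermonde, diagonal_mul, pow_succ']

theorem det_diagonal_mul_vandermonde_ne_zero {R : Type*} [CommRing R] [IsDomain R] {n : ℕ}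
    {x : Fin n → R} (hinj : Function.Injective x) (hx : ∀ a, x a ≠ 0) :
    (diagonal x * vandermonde x).det ≠ 0 := by
  rw [det_mul, det_diagonal]
  exact mul_ne_zero (prod_ne_zero_iff.2 fun a _ => hx a) (det_vandermonde_ne_zero_iff.2 hinj)

namespace Polynomial

variable {K : Type*} [Field K]

theorem natDegree_one_sub_prod_one_sub_C_inv_mul_X_le (s : Finset K) :
    (1 - ∏ t ∈ s, (1 - C t⁻¹ * X)).natDegree ≤ s.card := by
  have hfactor (t : K) : (1 - C t⁻¹ * X).natDegree ≤ 1 :=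
    (natDegree_sub_le _ _).trans (max_le (by simp) ((natDegree_C_mul_le _ _).trans (by simp)))
  refine (natDegree_sub_le _ _).trans (max_le (by simp) ((natDegree_prod_le _ _).trans ?_))
  simpa using sum_le_sum fun t (_ : t ∈ s) => hfactor t

theorem eq_one_sub_prod_of_eval_zero_of_eval_eq_one {p : K[X]} {s : Finset K} (hs : 0 ∉ s)
    (hdeg : p.natDegree ≤ s.card) (h0 : p.eval 0 = 0) (h1 : ∀ t ∈ s, p.eval t = 1) :
    p = 1 - ∏ t ∈ s, (1 - C t⁻¹ * X) := by
  classical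
  rw [← sub_eq_zero]
  refine eq_zero_of_natDegree_lt_card_of_eval_eq_zero' _ (insert 0 s) (fun y hy => ?_) ?_
  · rcases mem_insert.1 hy with rfl | hy
    · simp [eval_prod, h0]
    · have hy0 : y ≠ 0 := ne_of_mem_of_not_mem hy hs
      simp [eval_prod, h1 y hy, prod_eq_zero hy, inv_mul_cancel₀ hy0]
  · rw [card_insert_of_notMem hs, Nat.lt_succ_iff]
    exact (natDegree_sub_le _ _).trans (max_le hdeg (natDegree_one_sub_prod_one_sub_C_inv_mul_X_le s))

theorem natDegree_sum_C_mul_X_pow_succ_le {n : ℕ} (c : Fin n → K) :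
    (∑ b : Fin n, C (c b) * X ^ ((b : ℕ) + 1)).natDegree ≤ n :=
  natDegree_sum_le_of_forall_le _ _ fun b _ =>
    (natDegree_C_mul_le _ _).trans ((natDegree_X_pow_le _).trans b.isLt)

end Polynomial

theorem sum_pow_succ_mul_eq_one_sub_prod {K : Type*} [Field K] {n : ℕ} {x : Fin n → K}
    (hinj : Function.Injective x) (hx : ∀ a, x a ≠ 0) {c : Fin n → K}
    (hc : ∀ a, ∑ b : Fin n, x a ^ ((b : ℕ) + 1) * c b = 1) (y : K) :
    ∑ b : Fin n, y ^ ((b : ℕ) + 1) * c b = 1 - ∏ a, (1 - y / x a) := by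
  classical
  have hp := eq_one_sub_prod_of_eval_zero_of_eval_eq_one (s := univ.image x)
    (p := ∑ b : Fin n, C (c b) * X ^ ((b : ℕ) + 1))
    (by simpa using hx)
    (by rw [card_image_of_injective _ hinj, card_univ, Fintype.card_fin]
        exact natDegree_sum_C_mul_X_pow_succ_le c)
    (by simp [eval_finsetSum])
    (by
      simp only [mem_image, mem_univ, true_and, forall_exists_index, forall_apply_eq_imp_iff]
      intro a
      simp only [eval_finsetSum, eval_mul, eval_C, eval_pow, eval_X]
      rw [← hc a]
      exact sum_congr rfl fun b _ => mul_comm _ _)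
  have hpy := congrArg (eval y) hp
  simp only [eval_finsetSum, eval_mul, eval_C, eval_pow, eval_X, eval_sub, eval_one, eval_prod,
    prod_image fun a _ b _ h => hinj h] at hpy
  simp only [mul_comm (y ^ _), hpy, div_eq_inv_mul]

theorem stmt0 {m n : ℕ} (l : Fin m → ℝ) (hpos : ∀ i, 0 < l i) (hanti : StrictAnti l)
    (τ : Finset (Fin m)) (hτ : τ.card = n) :
    IsUnit (selLV l n τ hτ).det ∧
      ∀ i : Fin m,
        (∑ j : Fin n, l i ^ ((j : ℕ) + 1) * ((selLV l n τ hτ)⁻¹ *ᵥ (fun _ => 1)) j) =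
          1 - ∏ j ∈ τ, (1 - l i / l j) := by
  set e := τ.orderEmbOfFin hτ
  have hinj : Function.Injective (l ∘ e) := hanti.injective.comp e.injective
  have hunit : IsUnit (selLV l n τ hτ).det := by
    rw [selLV_eq_diagonal_mul_vandermonde]
    exact (det_diagonal_mul_vandermonde_ne_zero hinj fun a => (hpos _).ne').isUnit
  refine ⟨hunit, fun i => ?_⟩
  have hsolve : selLV l n τ hτ *ᵥ ((selLV l n τ hτ)⁻¹ *ᵥ fun _ => 1) = fun _ => 1 := by
    rw [mulVec_mulVec, mul_nonsing_inv _ hunit, one_mulVec]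
  rw [sum_pow_succ_mul_eq_one_sub_prod hinj (fun a => (hpos _).ne') (fun a => congrFun hsolve a),
    ← map_orderEmbOfFin_univ τ hτ, prod_map]
  rfl
end

section
/- Let λ₁ > ... > λ_m > 0, Λ = diag(λ), V the m×n Vandermonde matrix (n < m), ψ ∈ ℝ_+^m with at least n nonzero entries, and Ψ = diag(ψ). Then Vᵀ Ψ Λ V is invertible and the vector α(ψ) = (Vᵀ Ψ Λ V)⁻¹ Vᵀ ψ satisfies α(ψ) = (∑_{τ∈[m,n]} ψ^τ π_τ)⁻¹ ∑_{τ∈[m,n]} ψ^τ π_τ α_{(τ)}, where [m,n] denotes the size-n subsets of {1,...,m}, ψ^τ = ∏_{i∈τ} ψ_i, π_τ = (∏_{j∈τ} λ_j)·∏_{j<i in τ}(λ_i − λ_j)², and α_{(τ)} = (S_τᵀ Λ V)⁻¹ 𝟙. -/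
open Finset Matrix

/-- The extreme coefficient vector `α_{(τ)} = (S_τᵀ Λ V)⁻¹ 𝟙`. -/
noncomputable def alphaTau {m : ℕ} (l : Fin m → ℝ) (n : ℕ) (τ : Finset (Fin m))
    (h : τ.card = n) : Fin n → ℝ :=
  (selLV l n τ h)⁻¹ *ᵥ (fun _ => 1)

/-- The matrix `Vᵀ Ψ Λ V`, with `(a,b)` entry `∑ i, λ_i^a ψ_i λ_i^{b+1}`. -/
noncomputable def Bmat {m : ℕ} (l ψ : Fin m → ℝ) (n : ℕ) : Matrix (Fin n) (Fin n) ℝ :=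
  Matrix.of fun a b => ∑ i : Fin m, l i ^ (a : ℕ) * ψ i * l i ^ ((b : ℕ) + 1)

/-- The coefficient map `α(ψ) = (Vᵀ Ψ Λ V)⁻¹ Vᵀ ψ`. -/
noncomputable def alphaMap {m : ℕ} (l ψ : Fin m → ℝ) (n : ℕ) : Fin n → ℝ :=
  (Bmat l ψ n)⁻¹ *ᵥ (fun a => ∑ i : Fin m, l i ^ (a : ℕ) * ψ i)

/-- The shrinkage vector `ω(ψ) = Λ V α(ψ)`. -/
noncomputable def omegaMap {m : ℕ} (l ψ : Fin m → ℝ) (n : ℕ) : Fin m → ℝ :=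
  fun i => ∑ j : Fin n, l i ^ ((j : ℕ) + 1) * alphaMap l ψ n j

/-- The relative residual vector `z(ψ) = 𝟙 - ω(ψ)`. -/
noncomputable def zMap {m : ℕ} (l ψ : Fin m → ℝ) (n : ℕ) : Fin m → ℝ :=
  fun i => 1 - omegaMap l ψ n i

/-- `ψ^τ = ∏_{i∈τ} ψ_i`. -/
def psiPow {m : ℕ} (ψ : Fin m → ℝ) (τ : Finset (Fin m)) : ℝ := ∏ i ∈ τ, ψ i

/-- `π_τ = (∏_{j∈τ} λ_j) ∏_{j<i∈τ} (λ_i - λ_j)²`. -/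
def piTau {m : ℕ} (l : Fin m → ℝ) (τ : Finset (Fin m)) : ℝ :=
  (∏ j ∈ τ, l j) * ∏ j ∈ τ, ∏ i ∈ τ.filter (fun x => j < x), (l i - l j) ^ 2

/-- The number of nonzero entries of a vector. -/
noncomputable def suppCard {m : ℕ} (ψ : Fin m → ℝ) : ℕ :=
  ({i : Fin m | ψ i ≠ 0}).ncard


section CB
open Equiv Function
variable {R : Type*} [CommRing R]

local notation "ε " σ:arg => ((Equiv.Perm.sign σ : ℤ) : R)






lemma cb_aux {m n : ℕ} {A : Matrix (Fin n) (Fin m) R} {B : Matrix (Fin m) (Fin n) R}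
    {p : Fin n → Fin m} (H : ¬Function.Injective p) :
    (∑ σ : Equiv.Perm (Fin n), ε σ * ∏ x, A (σ x) (p x) * B (p x) x) = 0 := by
  obtain ⟨i, j, hpij, hij⟩ : ∃ i j, p i = p j ∧ i ≠ j := by
    rw [Function.Injective] at H
    push_neg at H
    obtain ⟨i, j, h1, h2⟩ := H
    exact ⟨i, j, h1, h2⟩
  exact
    Finset.sum_involution (fun σ _ => σ * Equiv.swap i j)
      (fun σ _ => by
        have : (∏ x, A (σ x) (p x)) = ∏ x, A ((σ * Equiv.swap i j) x) (p x) :=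
          Fintype.prod_equiv (Equiv.swap i j) _ _ (by simp [Equiv.apply_swap_eq_self hpij])
        simp [this, Equiv.Perm.sign_swap hij, -Equiv.Perm.sign_swap', Finset.prod_mul_distrib])
      (fun σ _ _ => (not_congr Equiv.mul_swap_eq_iff).mpr hij) (fun _ _ => Finset.mem_univ _)
      fun σ _ => Equiv.mul_swap_involutive i j σ

lemma cauchyBinet {m n : ℕ} (A : Matrix (Fin n) (Fin m) R) (B : Matrix (Fin m) (Fin n) R) :
    (A * B).det = ∑ τ ∈ (Finset.powersetCard n (Finset.univ : Finset (Fin m))).attach,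
      (A.submatrix id (τ.1.orderEmbOfFin (Finset.mem_powersetCard.mp τ.2).2)).det *
      (B.submatrix (τ.1.orderEmbOfFin (Finset.mem_powersetCard.mp τ.2).2) id).det := by
  have hc : ∀ τ : {x // x ∈ Finset.powersetCard n (Finset.univ : Finset (Fin m))},
      τ.1.card = n := fun τ => (Finset.mem_powersetCard.mp τ.2).2
  have step4 : ∀ e : Fin n ↪o Fin m,
      (∑ σ' : Equiv.Perm (Fin n), ∑ σ : Equiv.Perm (Fin n),
        ε σ * ∏ i, A (σ i) (e (σ' i)) * B (e (σ' i)) i)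
      = (A.submatrix id e).det * (B.submatrix e id).det := by
    intro e
    set M := A.submatrix id (e : Fin n → Fin m) with hM
    set N := B.submatrix (e : Fin n → Fin m) id with hN
    have h1 : ∀ σ' : Equiv.Perm (Fin n),
        (∑ σ : Equiv.Perm (Fin n), ε σ * ∏ i, A (σ i) (e (σ' i)) * B (e (σ' i)) i)
        = (ε σ') * M.det * ∏ i, N (σ' i) i := by
      intro σ'
      have hsplit : ∀ σ : Equiv.Perm (Fin n),
          (∏ i, A (σ i) (e (σ' i)) * B (e (σ' i)) i)
          = (∏ i, (M.submatrix id σ') (σ i) i) * ∏ i, N (σ' i) i := by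
        intro σ
        rw [← Finset.prod_mul_distrib]
        rfl
      simp_rw [hsplit, ← mul_assoc]
      rw [← Finset.sum_mul, ← Matrix.det_apply', Matrix.det_permute']
    calc (∑ σ' : Equiv.Perm (Fin n), ∑ σ : Equiv.Perm (Fin n),
          ε σ * ∏ i, A (σ i) (e (σ' i)) * B (e (σ' i)) i)
        = ∑ σ' : Equiv.Perm (Fin n), (ε σ') * M.det * ∏ i, N (σ' i) i := by
          exact Finset.sum_congr rfl fun σ' _ => h1 σ'
      _ = M.det * ∑ σ' : Equiv.Perm (Fin n), (ε σ') * ∏ i, N (σ' i) i := by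
          rw [Finset.mul_sum]; exact Finset.sum_congr rfl fun σ' _ => by ring
      _ = M.det * N.det := by rw [← Matrix.det_apply']
  calc (A * B).det
      = ∑ p : Fin n → Fin m, ∑ σ : Equiv.Perm (Fin n),
          ε σ * ∏ i, A (σ i) (p i) * B (p i) i := by
        simp only [Matrix.det_apply', Matrix.mul_apply, Finset.prod_univ_sum, Finset.mul_sum,
          Fintype.piFinset_univ]
        rw [Finset.sum_comm]
    _ = ∑ p ∈ Finset.univ.filter (fun p : Fin n → Fin m => Function.Injective p),
          ∑ σ : Equiv.Perm (Fin n), ε σ * ∏ i, A (σ i) (p i) * B (p i) i := by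
        refine (Finset.sum_subset (Finset.filter_subset _ _) fun p _ hp => cb_aux ?_).symm
        simpa using hp
    _ = ∑ x ∈ ((Finset.powersetCard n (Finset.univ : Finset (Fin m))).attach.sigma
          fun _ => (Finset.univ : Finset (Equiv.Perm (Fin n)))),
          ∑ σ : Equiv.Perm (Fin n),
            ε σ * ∏ i, A (σ i) ((x.1.1.orderEmbOfFin (hc x.1)) (x.2 i))
              * B ((x.1.1.orderEmbOfFin (hc x.1)) (x.2 i)) i := by
        refine (Finset.sum_bij
          (fun x _ => (x.1.1.orderEmbOfFin (hc x.1) : Fin n → Fin m) ∘ x.2) ?_ ?_ ?_ ?_).symm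
        · intro x _
          simp only [Finset.mem_filter, Finset.mem_univ, true_and]
          exact (x.1.1.orderEmbOfFin (hc x.1)).injective.comp x.2.injective
        · rintro ⟨⟨τ₁, hm₁⟩, σ₁⟩ _ ⟨⟨τ₂, hm₂⟩, σ₂⟩ _ h
          dsimp only at h
          have hrange : (↑τ₁ : Set (Fin m)) = (↑τ₂ : Set (Fin m)) := by
            have hr : Set.range ((τ₁.orderEmbOfFin (hc ⟨τ₁, hm₁⟩) : Fin n → Fin m) ∘ ⇑σ₁)
                = Set.range ((τ₂.orderEmbOfFin (hc ⟨τ₂, hm₂⟩) : Fin n → Fin m) ∘ ⇑σ₂) := by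
              rw [h]
            rwa [σ₁.surjective.range_comp, σ₂.surjective.range_comp,
              Finset.range_orderEmbOfFin, Finset.range_orderEmbOfFin] at hr
          have hτ : τ₁ = τ₂ := Finset.coe_injective hrange
          subst hτ
          have hσ : σ₁ = σ₂ :=
            Equiv.ext fun j => (τ₁.orderEmbOfFin (hc ⟨τ₁, hm₁⟩)).injective (congrFun h j)
          subst hσ
          rfl
        · intro p hp
          have hpinj : Function.Injective p := by simpa using hp
          set τ : Finset (Fin m) := Finset.image p Finset.univ with hτdef
          have hτ : τ.card = n := by
            rw [hτdef, Finset.card_image_of_injective _ hpinj, Finset.card_univ,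
              Fintype.card_fin]
          have hmem : τ ∈ Finset.powersetCard n (Finset.univ : Finset (Fin m)) :=
            Finset.mem_powersetCard.mpr ⟨Finset.subset_univ _, hτ⟩
          set g : Fin n → {x // x ∈ τ} :=
            fun j => ⟨p j, Finset.mem_image_of_mem p (Finset.mem_univ j)⟩ with hgdef
          have hg : Function.Bijective g := by
            refine (Fintype.bijective_iff_injective_and_card g).mpr ⟨?_, ?_⟩
            · intro a b hab
              exact hpinj (congrArg Subtype.val hab)
            · simp [Fintype.card_coe, hτ]
          set σ : Equiv.Perm (Fin n) :=
            (Equiv.ofBijective g hg).trans (τ.orderIsoOfFin hτ).toEquiv.symm with hσdef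
          refine ⟨⟨⟨τ, hmem⟩, σ⟩, Finset.mem_sigma.mpr ⟨Finset.mem_attach _ _, Finset.mem_univ _⟩,
            ?_⟩
          funext j
          show τ.orderEmbOfFin (hc ⟨τ, hmem⟩) (σ j) = p j
          have h1 : τ.orderEmbOfFin (hc ⟨τ, hmem⟩) (σ j)
              = ((τ.orderIsoOfFin hτ) (σ j) : Fin m) :=
            (Finset.coe_orderIsoOfFin_apply τ hτ (σ j)).symm
          rw [h1]
          have h2 : (τ.orderIsoOfFin hτ) (σ j) = g j := by
            show (τ.orderIsoOfFin hτ) ((τ.orderIsoOfFin hτ).toEquiv.symm (g j)) = g j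
            exact (τ.orderIsoOfFin hτ).toEquiv.apply_symm_apply (g j)
          rw [h2]
        · intro x _
          rfl
    _ = ∑ τ ∈ (Finset.powersetCard n (Finset.univ : Finset (Fin m))).attach,
          ∑ σ' : Equiv.Perm (Fin n), ∑ σ : Equiv.Perm (Fin n),
            ε σ * ∏ i, A (σ i) ((τ.1.orderEmbOfFin (hc τ)) (σ' i))
              * B ((τ.1.orderEmbOfFin (hc τ)) (σ' i)) i := Finset.sum_sigma _ _ _
    _ = _ := Finset.sum_congr rfl fun τ _ => step4 (τ.1.orderEmbOfFin (hc τ))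

end CB

section Aux
variable {m : ℕ} (l ψ : Fin m → ℝ) (n : ℕ)

/-- product over `τ` via the order embedding -/
lemma prod_emb (τ : Finset (Fin m)) (h : τ.card = n) (f : Fin m → ℝ) :
    (∏ a : Fin n, f (τ.orderEmbOfFin h a)) = ∏ i ∈ τ, f i := by
  have himg : Finset.image (τ.orderEmbOfFin h) Finset.univ = τ :=
    Finset.coe_injective (by
      rw [Finset.coe_image, Finset.coe_univ, Set.image_univ, Finset.range_orderEmbOfFin])
  refine Finset.prod_bij (fun a _ => τ.orderEmbOfFin h a)
    (fun a _ => τ.orderEmbOfFin_mem h a)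
    (fun a _ b _ hab => (τ.orderEmbOfFin h).injective hab) ?_ (fun a _ => rfl)
  intro i hi
  obtain ⟨a, _, ha⟩ := Finset.mem_image.mp (himg ▸ hi)
  exact ⟨a, Finset.mem_univ a, ha⟩

/-- the Vandermonde factor of `τ` -/
noncomputable def vprod (τ : Finset (Fin m)) (h : τ.card = n) : ℝ :=
  ∏ a : Fin n, ∏ b ∈ Finset.Ioi a, (l (τ.orderEmbOfFin h b) - l (τ.orderEmbOfFin h a))

lemma selLV_eq (τ : Finset (Fin m)) (h : τ.card = n) :
    selLV l n τ h = Matrix.diagonal (fun a => l (τ.orderEmbOfFin h a)) *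
      Matrix.vandermonde (fun a => l (τ.orderEmbOfFin h a)) := by
  ext a b
  simp only [selLV, Matrix.of_apply, Matrix.diagonal_mul, Matrix.vandermonde_apply]
  ring

lemma det_selLV (τ : Finset (Fin m)) (h : τ.card = n) :
    (selLV l n τ h).det = (∏ i ∈ τ, l i) * vprod l n τ h := by
  rw [selLV_eq, Matrix.det_mul, Matrix.det_diagonal, Matrix.det_vandermonde, prod_emb, vprod]

lemma piTau_eq (τ : Finset (Fin m)) (h : τ.card = n) :
    piTau l τ = (∏ i ∈ τ, l i) * (vprod l n τ h) ^ 2 := by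
  rw [piTau, vprod]
  congr 1
  rw [← Finset.prod_pow]
  simp_rw [← Finset.prod_pow]
  rw [Finset.prod_sigma', Finset.prod_sigma']
  refine (Finset.prod_bij (fun x _ =>
    (⟨τ.orderEmbOfFin h x.1, τ.orderEmbOfFin h x.2⟩ : Σ _ : Fin m, Fin m)) ?_ ?_ ?_ ?_).symm
  · rintro ⟨a, b⟩ hx
    have hab : a < b := Finset.mem_Ioi.mp (Finset.mem_sigma.mp hx).2
    refine Finset.mem_sigma.mpr ⟨τ.orderEmbOfFin_mem h a, Finset.mem_filter.mpr
      ⟨τ.orderEmbOfFin_mem h b, (τ.orderEmbOfFin h).strictMono hab⟩⟩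
  · rintro ⟨a₁, b₁⟩ _ ⟨a₂, b₂⟩ _ hx
    dsimp only at hx
    obtain ⟨h1, h2⟩ := Sigma.mk.inj_iff.mp hx
    have e1 : a₁ = a₂ := (τ.orderEmbOfFin h).injective h1
    have e2 : b₁ = b₂ := (τ.orderEmbOfFin h).injective (by
      subst e1; exact eq_of_heq h2)
    simp [e1, e2]
  · rintro ⟨j, i⟩ hx
    obtain ⟨hj, hi'⟩ := Finset.mem_sigma.mp hx
    obtain ⟨hi, hji⟩ := Finset.mem_filter.mp hi'
    have himg : Finset.image (τ.orderEmbOfFin h) Finset.univ = τ :=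
      Finset.coe_injective (by
        rw [Finset.coe_image, Finset.coe_univ, Set.image_univ, Finset.range_orderEmbOfFin])
    obtain ⟨a, _, ha⟩ := Finset.mem_image.mp (himg ▸ hj)
    obtain ⟨b, _, hb⟩ := Finset.mem_image.mp (himg ▸ hi)
    have hab : a < b := (τ.orderEmbOfFin h).lt_iff_lt.mp (by rw [ha, hb]; exact hji)
    exact ⟨⟨a, b⟩, Finset.mem_sigma.mpr ⟨Finset.mem_univ _, Finset.mem_Ioi.mpr hab⟩,
      by simp [ha, hb]⟩
  · rintro ⟨a, b⟩ _
    rfl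

lemma vprod_ne_zero (hanti : StrictAnti l) (τ : Finset (Fin m)) (h : τ.card = n) :
    vprod l n τ h ≠ 0 := by
  rw [vprod]
  refine Finset.prod_ne_zero_iff.mpr fun a _ => Finset.prod_ne_zero_iff.mpr fun b hb => ?_
  have hab : a < b := Finset.mem_Ioi.mp hb
  have : l (τ.orderEmbOfFin h b) < l (τ.orderEmbOfFin h a) :=
    hanti ((τ.orderEmbOfFin h).strictMono hab)
  exact sub_ne_zero_of_ne this.ne

lemma det_selLV_ne_zero (hpos : ∀ i, 0 < l i) (hanti : StrictAnti l)
    (τ : Finset (Fin m)) (h : τ.card = n) : (selLV l n τ h).det ≠ 0 := by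
  rw [det_selLV]
  exact mul_ne_zero (Finset.prod_pos (fun i _ => hpos i)).ne' (vprod_ne_zero l n hanti τ h)

lemma piTau_pos (hpos : ∀ i, 0 < l i) (hanti : StrictAnti l)
    (τ : Finset (Fin m)) (h : τ.card = n) : 0 < piTau l τ := by
  rw [piTau_eq l n τ h]
  have hne := vprod_ne_zero l n hanti τ h
  exact mul_pos (Finset.prod_pos fun i _ => hpos i)
    (lt_of_le_of_ne (sq_nonneg _) (Ne.symm (pow_ne_zero 2 hne)))
end Aux


section Main
variable {m : ℕ} (l ψ : Fin m → ℝ) (n : ℕ)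

noncomputable def Amat : Matrix (Fin n) (Fin m) ℝ := Matrix.of fun a i => l i ^ (a : ℕ)
noncomputable def Cmat : Matrix (Fin m) (Fin n) ℝ :=
  Matrix.of fun i b => ψ i * l i ^ ((b : ℕ) + 1)

lemma Bmat_eq : Bmat l ψ n = Amat l n * Cmat l ψ n := by
  ext a b
  simp [Bmat, Amat, Cmat, Matrix.mul_apply, mul_assoc]

lemma Asub_det (τ : Finset (Fin m)) (h : τ.card = n) :
    ((Amat l n).submatrix id (τ.orderEmbOfFin h : Fin n → Fin m)).det = vprod l n τ h := by
  have he : (Amat l n).submatrix id (τ.orderEmbOfFin h : Fin n → Fin m)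
      = (Matrix.vandermonde fun a => l (τ.orderEmbOfFin h a))ᵀ := by
    ext a b
    simp [Amat, Matrix.vandermonde]
  rw [he, Matrix.det_transpose, Matrix.det_vandermonde, vprod]

lemma Csub_eq (τ : Finset (Fin m)) (h : τ.card = n) :
    (Cmat l ψ n).submatrix (τ.orderEmbOfFin h : Fin n → Fin m) id
      = Matrix.diagonal (fun a => ψ (τ.orderEmbOfFin h a)) * selLV l n τ h := by
  ext a b
  simp [Cmat, selLV, Matrix.diagonal_mul]

lemma Csub_det (τ : Finset (Fin m)) (h : τ.card = n) :
    ((Cmat l ψ n).submatrix (τ.orderEmbOfFin h : Fin n → Fin m) id).det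
      = psiPow ψ τ * (selLV l n τ h).det := by
  rw [Csub_eq, Matrix.det_mul, Matrix.det_diagonal, prod_emb, psiPow]

lemma det_Bmat : (Bmat l ψ n).det
    = ∑ τ ∈ Finset.powersetCard n (Finset.univ : Finset (Fin m)),
        psiPow ψ τ * piTau l τ := by
  rw [Bmat_eq, cauchyBinet,
    ← Finset.sum_attach (Finset.powersetCard n (Finset.univ : Finset (Fin m)))
      (fun τ => psiPow ψ τ * piTau l τ)]
  refine Finset.sum_congr rfl fun τ _ => ?_
  have h := (Finset.mem_powersetCard.mp τ.2).2
  rw [Asub_det l n τ.1 h, Csub_det l ψ n τ.1 h, det_selLV, piTau_eq l n τ.1 h]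
  ring

lemma cramer_lemma (hpos : ∀ i, 0 < l i) (hanti : StrictAnti l) (k : Fin n) :
    Matrix.cramer (Bmat l ψ n) (fun a => ∑ i : Fin m, l i ^ (a : ℕ) * ψ i) k
      = ∑ τ ∈ (Finset.powersetCard n (Finset.univ : Finset (Fin m))).attach,
          (psiPow ψ τ.1 * piTau l τ.1) *
            alphaTau l n τ.1 (Finset.mem_powersetCard.mp τ.2).2 k := by
  rw [Matrix.cramer_apply]
  have hupd : (Bmat l ψ n).updateCol k (fun a => ∑ i : Fin m, l i ^ (a : ℕ) * ψ i)
      = Amat l n * ((Cmat l ψ n).updateCol k ψ) := by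
    ext a b
    by_cases hb : b = k <;>
      simp [Matrix.updateCol_apply, Matrix.mul_apply, Bmat, Amat, Cmat, hb, mul_assoc]
  rw [hupd, cauchyBinet]
  refine Finset.sum_congr rfl fun τ _ => ?_
  have h := (Finset.mem_powersetCard.mp τ.2).2
  have hsub : ((Cmat l ψ n).updateCol k ψ).submatrix
        (τ.1.orderEmbOfFin h : Fin n → Fin m) id
      = ((Cmat l ψ n).submatrix (τ.1.orderEmbOfFin h : Fin n → Fin m) id).updateCol k
          (fun a => ψ (τ.1.orderEmbOfFin h a)) := by
    ext a b
    by_cases hb : b = k <;> simp [Matrix.updateCol_apply, hb]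
  have hdiag : ((Cmat l ψ n).submatrix (τ.1.orderEmbOfFin h : Fin n → Fin m) id).updateCol k
        (fun a => ψ (τ.1.orderEmbOfFin h a))
      = Matrix.diagonal (fun a => ψ (τ.1.orderEmbOfFin h a)) *
          ((selLV l n τ.1 h).updateCol k (fun _ => 1)) := by
    rw [Csub_eq]
    ext a b
    by_cases hb : b = k <;>
      simp [Matrix.updateCol_apply, Matrix.diagonal_mul, hb]
  have hcr : ((selLV l n τ.1 h).updateCol k fun _ => (1 : ℝ)).det
      = (selLV l n τ.1 h).det * alphaTau l n τ.1 h k := by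
    rw [← Matrix.cramer_apply, Matrix.cramer_eq_adjugate_mulVec]
    have hadj : (selLV l n τ.1 h).adjugate
        = (selLV l n τ.1 h).det • (selLV l n τ.1 h)⁻¹ := by
      rw [Matrix.inv_def, Ring.inverse_eq_inv, smul_smul,
        mul_inv_cancel₀ (det_selLV_ne_zero l n hpos hanti τ.1 h), one_smul]
    rw [hadj, Matrix.smul_mulVec]
    simp [alphaTau]
  rw [hsub, hdiag, Matrix.det_mul, Matrix.det_diagonal, hcr,
    Asub_det l n τ.1 h, prod_emb n τ.1 h ψ, det_selLV, piTau_eq l n τ.1 h]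
  show vprod l n τ.1 h * ((∏ i ∈ τ.1, ψ i) *
      (((∏ i ∈ τ.1, l i) * vprod l n τ.1 h) * alphaTau l n τ.1 h k)) = _
  rw [psiPow]
  ring

end Main

theorem stmt2 {m n : ℕ} (hnm : n < m) (l : Fin m → ℝ) (hpos : ∀ i, 0 < l i)
    (hanti : StrictAnti l) (ψ : Fin m → ℝ) (hψ : ∀ i, 0 ≤ ψ i)
    (hcard : n ≤ suppCard ψ) :
    IsUnit (Bmat l ψ n).det ∧
      alphaMap l ψ n =
        (∑ τ ∈ Finset.powersetCard n (Finset.univ : Finset (Fin m)),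
            psiPow ψ τ * piTau l τ)⁻¹ •
          ∑ τ ∈ (Finset.powersetCard n (Finset.univ : Finset (Fin m))).attach,
            (psiPow ψ τ.1 * piTau l τ.1) •
              alphaTau l n τ.1 (Finset.mem_powersetCard.mp τ.2).2 := by
  have hterm : ∀ τ ∈ Finset.powersetCard n (Finset.univ : Finset (Fin m)),
      0 ≤ psiPow ψ τ * piTau l τ := fun τ hτ =>
    mul_nonneg (Finset.prod_nonneg fun i _ => hψ i)
      (piTau_pos l n hpos hanti τ (Finset.mem_powersetCard.mp hτ).2).le
  have hex : ∃ τ ∈ Finset.powersetCard n (Finset.univ : Finset (Fin m)),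
      0 < psiPow ψ τ * piTau l τ := by
    set s := Finset.univ.filter (fun i => ψ i ≠ 0) with hsdef
    have hs : n ≤ s.card := by
      have hset : ({i : Fin m | ψ i ≠ 0}) = (↑s : Set (Fin m)) := by
        ext i; simp [hsdef]
      rw [suppCard, hset, Set.ncard_coe_finset] at hcard
      exact hcard
    obtain ⟨t, hts, htc⟩ := Finset.exists_subset_card_eq hs
    refine ⟨t, Finset.mem_powersetCard.mpr ⟨Finset.subset_univ _, htc⟩, ?_⟩
    refine mul_pos (Finset.prod_pos fun i hi => ?_) (piTau_pos l n hpos hanti t htc)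
    have hne := (Finset.mem_filter.mp (hts hi)).2
    exact lt_of_le_of_ne (hψ i) (Ne.symm hne)
  have hD : 0 < ∑ τ ∈ Finset.powersetCard n (Finset.univ : Finset (Fin m)),
      psiPow ψ τ * piTau l τ := Finset.sum_pos' hterm hex
  have hdet := det_Bmat l ψ n
  refine ⟨by rw [hdet]; exact isUnit_iff_ne_zero.mpr hD.ne', ?_⟩
  funext k
  have halpha : alphaMap l ψ n = Ring.inverse (Bmat l ψ n).det •
      Matrix.cramer (Bmat l ψ n) (fun a => ∑ i : Fin m, l i ^ (a : ℕ) * ψ i) := by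
    rw [alphaMap, Matrix.inv_def, Matrix.smul_mulVec,
      ← Matrix.cramer_eq_adjugate_mulVec]
  rw [halpha]
  simp only [Pi.smul_apply, smul_eq_mul, Finset.sum_apply, Ring.inverse_eq_inv, hdet]
  rw [cramer_lemma l ψ n hpos hanti k]
end

section
/- Let t = {t₀ < t₁ < ... < t_n} ⊆ {1,...,m} and let z be any convex combination of the vectors {z_{(τ)} : τ ⊂ t, |τ| = n}. Then (−1)^{n−k} z_{t_k} ≥ 0 for k = 0,1,...,n; moreover z_i ≥ 0 for all i > t_n, and (−1)^n z_i ≥ 0 for all i < t₀. -/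
open Finset

/-- `z_{(τ)}`, the extreme relative residual vector: `z_{(τ),i} = ∏_{j∈τ}(1 - λ_i/λ_j)`. -/
noncomputable def zTau {m : ℕ} (l : Fin m → ℝ) (τ : Finset (Fin m)) : Fin m → ℝ :=
  fun i => ∏ j ∈ τ, (1 - l i / l j)

/-! Each factor `1 - λ_i/λ_j` of `z_{(τ),i}` vanishes for `j = i`, is negative for `j > i` and
positive for `j < i`, so `z_{(τ),i}` has the sign `(-1)^{#{j ∈ τ | i < j}}`. For `τ = t \ {t_k}`
only the `k`-th vertex survives at `i = t_k`, with `n - k` elements of `τ` above it; for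
`i > t_n` no element of `τ` lies above `i`, and for `i < t₀` all `n` do. These signs do not
depend on the vertex `τ`, so they pass to every nonnegative combination. -/

section OrderEmbOfFin

variable {α : Type*} [LinearOrder α] {s : Finset α}

lemma card_filter_orderEmbOfFin_lt {k : ℕ} (h : #s = k) (i : Fin k) :
    #{j ∈ s | s.orderEmbOfFin h i < j} = k - 1 - i := by
  have himage :
      {j ∈ s | s.orderEmbOfFin h i < j} = (Ioi i).map (s.orderEmbOfFin h).toEmbedding := by
    ext j
    simp only [mem_filter, mem_map, mem_Ioi, RelEmbedding.coe_toEmbedding]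
    constructor
    · rintro ⟨hj, hlt⟩
      obtain ⟨a, rfl⟩ : j ∈ Set.range (s.orderEmbOfFin h) := by rwa [range_orderEmbOfFin]
      exact ⟨a, (s.orderEmbOfFin h).lt_iff_lt.1 hlt, rfl⟩
    · rintro ⟨a, ha, rfl⟩
      exact ⟨s.orderEmbOfFin_mem h a, (s.orderEmbOfFin h).lt_iff_lt.2 ha⟩
  rw [himage, card_map, Fin.card_Ioi]

lemma le_orderEmbOfFin_last {k : ℕ} (h : #s = k + 1) {j : α} (hj : j ∈ s) :
    j ≤ s.orderEmbOfFin h (Fin.last k) := by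
  obtain ⟨a, rfl⟩ : j ∈ Set.range (s.orderEmbOfFin h) := by rwa [range_orderEmbOfFin]
  exact (s.orderEmbOfFin h).monotone (Fin.le_last a)

lemma orderEmbOfFin_zero_le {k : ℕ} (h : #s = k + 1) {j : α} (hj : j ∈ s) :
    s.orderEmbOfFin h 0 ≤ j := by
  obtain ⟨a, rfl⟩ : j ∈ Set.range (s.orderEmbOfFin h) := by rwa [range_orderEmbOfFin]
  exact (s.orderEmbOfFin h).monotone (Fin.zero_le a)

end OrderEmbOfFin

section Sign

variable {m : ℕ} {l : Fin m → ℝ}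

lemma zTau_eq_zero_of_mem (hl : ∀ i, l i ≠ 0) {τ : Finset (Fin m)} {i : Fin m} (hi : i ∈ τ) :
    zTau l τ i = 0 :=
  prod_eq_zero hi (by rw [div_self (hl i), sub_self])

lemma neg_one_pow_card_filter_lt_mul_zTau_nonneg (hpos : ∀ i, 0 < l i) (hanti : StrictAnti l)
    (τ : Finset (Fin m)) (i : Fin m) :
    0 ≤ (-1 : ℝ) ^ #{j ∈ τ | i < j} * zTau l τ i := by
  by_cases hi : i ∈ τ
  · rw [zTau_eq_zero_of_mem (fun j => (hpos j).ne') hi, mul_zero]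
  rw [zTau, ← prod_filter_mul_prod_filter_not τ (i < ·), ← mul_assoc, ← prod_neg]
  refine mul_nonneg (prod_nonneg fun j hj => ?_) (prod_nonneg fun j hj => ?_)
  · rw [mem_filter] at hj
    have := (one_lt_div (hpos j)).2 (hanti hj.2)
    linarith
  · rw [mem_filter, not_lt] at hj
    have hji : j < i := hj.2.lt_of_ne (by rintro rfl; exact hi hj.1)
    have := (div_lt_one (hpos j)).2 (hanti hji)
    linarith

lemma zTau_nonneg_of_forall_lt (hpos : ∀ i, 0 < l i) (hanti : StrictAnti l)
    {τ : Finset (Fin m)} {i : Fin m} (hτ : ∀ j ∈ τ, j < i) : 0 ≤ zTau l τ i := by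
  have := neg_one_pow_card_filter_lt_mul_zTau_nonneg hpos hanti τ i
  rwa [filter_false_of_mem fun j hj => not_lt.2 (hτ j hj).le, card_empty, pow_zero,
    one_mul] at this

lemma neg_one_pow_card_mul_zTau_nonneg_of_forall_gt (hpos : ∀ i, 0 < l i)
    (hanti : StrictAnti l) {τ : Finset (Fin m)} {i : Fin m} (hτ : ∀ j ∈ τ, i < j) :
    0 ≤ (-1 : ℝ) ^ #τ * zTau l τ i := by
  have := neg_one_pow_card_filter_lt_mul_zTau_nonneg hpos hanti τ i
  rwa [filter_true_of_mem hτ] at this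

end Sign

theorem stmt7_general {m n : ℕ} (l : Fin m → ℝ) (hpos : ∀ i, 0 < l i) (hanti : StrictAnti l)
    (t : Finset (Fin m)) (ht : t.card = n + 1)
    (c : Fin (n + 1) → ℝ) (hc : ∀ k, 0 ≤ c k)
    (z : Fin m → ℝ)
    (hz : z = fun i => ∑ k : Fin (n + 1), c k * zTau l (t.erase (t.orderEmbOfFin ht k)) i) :
    (∀ k : Fin (n + 1), 0 ≤ (-1 : ℝ) ^ (n - (k : ℕ)) * z (t.orderEmbOfFin ht k)) ∧
      (∀ i : Fin m, t.orderEmbOfFin ht (Fin.last n) < i → 0 ≤ z i) ∧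
      (∀ i : Fin m, i < t.orderEmbOfFin ht 0 → 0 ≤ (-1 : ℝ) ^ n * z i) := by
  set e := t.orderEmbOfFin ht
  subst hz
  dsimp only
  refine ⟨fun k => ?_, fun i hi => ?_, fun i hi => ?_⟩
  · have hsingle : ∑ j, c j * zTau l (t.erase (e j)) (e k) = c k * zTau l (t.erase (e k)) (e k) :=
      Fintype.sum_eq_single k fun j hjk => by
        rw [zTau_eq_zero_of_mem (fun i => (hpos i).ne') (mem_erase.2
          ⟨fun h => hjk (e.injective h).symm, t.orderEmbOfFin_mem ht k⟩), mul_zero]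
    have hcard : #{j ∈ t.erase (e k) | e k < j} = n - k := by
      rw [filter_erase, erase_eq_of_notMem (by simp), card_filter_orderEmbOfFin_lt,
        add_tsub_cancel_right]
    have hsign := neg_one_pow_card_filter_lt_mul_zTau_nonneg hpos hanti (t.erase (e k)) (e k)
    rw [hcard] at hsign
    simpa only [hsingle, mul_left_comm] using mul_nonneg (hc k) hsign
  · exact sum_nonneg fun k _ => mul_nonneg (hc k) (zTau_nonneg_of_forall_lt hpos hanti
      fun j hj => (le_orderEmbOfFin_last ht (mem_of_mem_erase hj)).trans_lt hi)
  · rw [mul_sum]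
    refine sum_nonneg fun k _ => ?_
    rw [mul_left_comm]
    have hcard : #(t.erase (e k)) = n := by
      rw [card_erase_of_mem (t.orderEmbOfFin_mem ht k), ht, add_tsub_cancel_right]
    have hsign := neg_one_pow_card_mul_zTau_nonneg_of_forall_gt hpos hanti
      fun j (hj : j ∈ t.erase (e k)) => hi.trans_le (orderEmbOfFin_zero_le ht (mem_of_mem_erase hj))
    rw [hcard] at hsign
    exact mul_nonneg (hc k) hsign

theorem stmt7 {m n : ℕ} (l : Fin m → ℝ) (hpos : ∀ i, 0 < l i) (hanti : StrictAnti l)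
    (t : Finset (Fin m)) (ht : t.card = n + 1)
    (c : Fin (n + 1) → ℝ) (hc : ∀ k, 0 ≤ c k) (hc1 : ∑ k, c k = 1)
    (z : Fin m → ℝ)
    (hz : z = fun i => ∑ k : Fin (n + 1), c k * zTau l (t.erase (t.orderEmbOfFin ht k)) i) :
    (∀ k : Fin (n + 1), 0 ≤ (-1 : ℝ) ^ (n - (k : ℕ)) * z (t.orderEmbOfFin ht k)) ∧
      (∀ i : Fin m, t.orderEmbOfFin ht (Fin.last n) < i → 0 ≤ z i) ∧
      (∀ i : Fin m, i < t.orderEmbOfFin ht 0 → 0 ≤ (-1 : ℝ) ^ n * z i) :=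
  stmt7_general l hpos hanti t ht c hc z hz
end

section
/- Let λ₁ > ... > λ_m > 0 distinct, n < m, ψ ∈ ℝ_+^m with cardinality ≥ n, Ψ = diag(ψ), and z = z(ψ) = 𝟙 − Λ V (Vᵀ Ψ Λ V)⁻¹ Vᵀ ψ. If Ψ z = 0 (i.e. ψ_i z_i = 0 for all i), then ψ has cardinality exactly n. -/
open Finset Matrix

open Polynomial

/-!
`z_i = p(λ_i)` for the polynomial `p = 1 - ∑_{j<n} α_j X^{j+1}`, which has constant term `1`, hence
is nonzero, and has degree at most `n`. The hypothesis `ψ_i z_i = 0` makes `λ_i` a root of `p` whenever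
`ψ_i ≠ 0`; since the `λ_i` are distinct, `ψ` has at most `n` nonzero entries.
-/

theorem Polynomial.ncard_le_natDegree_of_isRoot {ι R : Type*} [CommRing R] [IsDomain R]
    {p : R[X]} (hp : p ≠ 0) {f : ι → R} {s : Set ι} (hf : s.InjOn f)
    (hroot : ∀ i ∈ s, p.IsRoot (f i)) : s.ncard ≤ p.natDegree := by
  classical
  have hfin : (f '' s).Finite :=
    p.roots.toFinset.finite_toSet.subset fun _ ⟨i, hi, hfi⟩ => by
      simpa [← hfi, hp] using hroot i hi
  rw [← hf.ncard_image, ← hfin.coe_toFinset, Set.ncard_coe_finset]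
  refine card_le_degree_of_subset_roots fun x hx => ?_
  obtain ⟨i, hi, rfl⟩ := hfin.mem_toFinset.1 hx
  exact (mem_roots hp).2 (hroot i hi)

section residualPoly

variable {R : Type*} [CommRing R] {n : ℕ}

noncomputable def residualPoly (α : Fin n → R) : R[X] :=
  1 - ∑ j : Fin n, C (α j) * X ^ ((j : ℕ) + 1)

theorem coeff_residualPoly_zero (α : Fin n → R) : (residualPoly α).coeff 0 = 1 := by
  simp [residualPoly, coeff_X_pow]

theorem residualPoly_ne_zero [Nontrivial R] (α : Fin n → R) : residualPoly α ≠ 0 := fun h => by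
  simpa [h] using coeff_residualPoly_zero α

theorem natDegree_residualPoly_le (α : Fin n → R) : (residualPoly α).natDegree ≤ n := by
  refine (natDegree_sub_le _ _).trans (max_le (by simp) ?_)
  exact natDegree_sum_le_of_forall_le _ _ fun j _ =>
    (natDegree_C_mul_le _ _).trans ((natDegree_X_pow_le _).trans j.2)

theorem eval_residualPoly (α : Fin n → R) (x : R) :
    (residualPoly α).eval x = 1 - ∑ j : Fin n, α j * x ^ ((j : ℕ) + 1) := by
  simp only [residualPoly, eval_sub, eval_one, eval_finsetSum, eval_mul, eval_C, eval_pow, eval_X]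

end residualPoly

theorem zMap_eq_eval_residualPoly {m : ℕ} (l ψ : Fin m → ℝ) (n : ℕ) (i : Fin m) :
    zMap l ψ n i = (residualPoly (alphaMap l ψ n)).eval (l i) := by
  simp only [zMap, omegaMap, eval_residualPoly, mul_comm]

theorem suppCard_le_of_mul_zMap_eq_zero {m n : ℕ} {l : Fin m → ℝ} (hl : Function.Injective l)
    {ψ : Fin m → ℝ} (hzero : ∀ i, ψ i * zMap l ψ n i = 0) : suppCard ψ ≤ n := by
  refine (ncard_le_natDegree_of_isRoot (residualPoly_ne_zero (alphaMap l ψ n)) hl.injOn fun i hi => ?_).trans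
    (natDegree_residualPoly_le _)
  rw [IsRoot, ← zMap_eq_eval_residualPoly]
  exact (mul_eq_zero.1 (hzero i)).resolve_left hi

theorem stmt10_general {m n : ℕ} (l : Fin m → ℝ)
    (hanti : StrictAnti l) (ψ : Fin m → ℝ)
    (hcard : n ≤ suppCard ψ)
    (hzero : ∀ i, ψ i * zMap l ψ n i = 0) :
    suppCard ψ = n :=
  (suppCard_le_of_mul_zMap_eq_zero hanti.injective hzero).antisymm hcard

theorem stmt10 {m n : ℕ} (hnm : n < m) (l : Fin m → ℝ) (hpos : ∀ i, 0 < l i)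
    (hanti : StrictAnti l) (ψ : Fin m → ℝ) (hψ : ∀ i, 0 ≤ ψ i)
    (hcard : n ≤ suppCard ψ)
    (hzero : ∀ i, ψ i * zMap l ψ n i = 0) :
    suppCard ψ = n :=
  stmt10_general l hanti ψ hcard hzero
end

section
/- Let n < m, ψ ∈ ℝ_+^m with cardinality strictly greater than n, and z = z(ψ) = 𝟙 − Λ V (Vᵀ Ψ Λ V)⁻¹ Vᵀ ψ. Then v_m(z) ∈ {n−1, n} and v_M(z) ≤ n. If additionally z₁ ≠ 0 and z_m ≠ 0, then v_m(z) = n. -/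
open Finset Matrix

/-- Number of sign changes of a vector: `v(y) = #{i : y_i y_{i+1} < 0}`. -/
noncomputable def vCount {m : ℕ} (y : Fin m → ℝ) : ℕ :=
  {i : Fin m | ∃ h : (i : ℕ) + 1 < m, y i * y ⟨(i : ℕ) + 1, h⟩ < 0}.ncard

/-- Minimal number of sign changes over full-cardinality completions
sign-concordant with `x`. -/
noncomputable def vMin {m : ℕ} (x : Fin m → ℝ) : ℕ :=
  sInf {k | ∃ y : Fin m → ℝ, (∀ i, y i ≠ 0) ∧ (∀ i, 0 ≤ x i * y i) ∧ vCount y = k}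

/-- Maximal number of sign changes over full-cardinality completions
sign-concordant with `x`. -/
noncomputable def vMax {m : ℕ} (x : Fin m → ℝ) : ℕ :=
  sSup {k | ∃ y : Fin m → ℝ, (∀ i, y i ≠ 0) ∧ (∀ i, 0 ≤ x i * y i) ∧ vCount y = k}


-- ===== auxiliary lemmas =====

open Polynomial in
lemma exists_root_between {p : Polynomial ℝ} {a b : ℝ} (hab : a < b)
    (h : p.eval a * p.eval b < 0) : ∃ x ∈ Set.Ioo a b, p.eval x = 0 := by
  have hc : ContinuousOn (fun x => p.eval x) (Set.Icc a b) :=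
    (Polynomial.continuous p).continuousOn
  rcases mul_neg_iff.1 h with ⟨ha, hb⟩ | ⟨ha, hb⟩
  · have := intermediate_value_Ioo' hab.le hc (Set.mem_Ioo.2 ⟨hb, ha⟩)
    obtain ⟨x, hx, hx0⟩ := this
    exact ⟨x, hx, hx0⟩
  · have := intermediate_value_Ioo hab.le hc (Set.mem_Ioo.2 ⟨ha, hb⟩)
    obtain ⟨x, hx, hx0⟩ := this
    exact ⟨x, hx, hx0⟩

open Polynomial in
lemma alt_roots (N : ℕ) : ∀ (p : Polynomial ℝ), p ≠ 0 → ∀ (t : ℕ → ℝ),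
    (∀ a b : ℕ, a < b → b ≤ N → t b < t a) → ∀ ε : ℝ, ε ≠ 0 →
    (∀ s, s ≤ N → 0 ≤ ε * (-1 : ℝ)^s * p.eval (t s)) →
    N ≤ Multiset.card p.roots := by
  induction N with
  | zero => intro p hp t _ ε _ _; exact Nat.zero_le _
  | succ N ih =>
    intro p hp t ht ε hε hsign
    by_cases hzero : ∃ s ≤ N + 1, p.eval (t s) = 0
    · obtain ⟨s, hsN, hs0⟩ := hzero
      obtain ⟨q, hq⟩ := (dvd_iff_isRoot.2 hs0 : X - C (t s) ∣ p)
      have hq0 : q ≠ 0 := by rintro rfl; simp at hq; exact hp hq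
      have hroots : p.roots = (t s) ::ₘ q.roots := by
        rw [hq, roots_mul (hq ▸ hp), roots_X_sub_C]; rfl
      have key : N ≤ Multiset.card q.roots := by
        apply ih q hq0 (fun j => t (if j < s then j else j + 1)) ?_ ε hε ?_
        · intro a b hab hbN
          apply ht
          · split <;> split <;> omega
          · split <;> omega
        · intro j hjN
          by_cases hjs : j < s
          · simp only [if_pos hjs]
            have h1 := hsign j (by omega)
            have h2 : 0 < t j - t s := by
              have := ht j s hjs hsN; linarith
            have hpe : p.eval (t j) = (t j - t s) * q.eval (t j) := by
              rw [hq]; simp [sub_mul]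
            rw [hpe] at h1
            nlinarith [h1, h2]
          · simp only [if_neg hjs]
            have h1 := hsign (j+1) (by omega)
            have h2 : t (j+1) - t s < 0 := by
              have := ht s (j+1) (by omega) (by omega); linarith
            have hpe : p.eval (t (j+1)) = (t (j+1) - t s) * q.eval (t (j+1)) := by
              rw [hq]; simp [sub_mul]
            rw [hpe, pow_succ] at h1
            nlinarith [h1, h2]
      rw [hroots]; simp; omega
    · push_neg at hzero
      -- strict alternation: a root in each interval (t (s+1), t s)
      have hroot : ∀ s < N + 1, ∃ x ∈ Set.Ioo (t (s+1)) (t s), p.eval x = 0 := by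
        intro s hs
        apply exists_root_between (ht s (s+1) (by omega) (by omega))
        have h1 := hsign (s+1) (by omega)
        have h2 := hsign s (by omega)
        have h1' := hzero (s+1) (by omega)
        have h2' := hzero s (by omega)
        have hne1 : ε * (-1:ℝ)^(s+1) * p.eval (t (s+1)) ≠ 0 := by
          exact mul_ne_zero (mul_ne_zero hε (by positivity)) h1'
        have hne2 : ε * (-1:ℝ)^s * p.eval (t s) ≠ 0 := by
          exact mul_ne_zero (mul_ne_zero hε (by positivity)) h2'
        have e1 : 0 < ε * (-1:ℝ)^(s+1) * p.eval (t (s+1)) := lt_of_le_of_ne h1 (Ne.symm hne1)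
        have e2 : 0 < ε * (-1:ℝ)^s * p.eval (t s) := lt_of_le_of_ne h2 (Ne.symm hne2)
        have hsq : ((-1:ℝ)^s) * ((-1:ℝ)^s) = 1 := by
          rw [← mul_pow]; norm_num
        rw [pow_succ] at e1
        nlinarith [mul_pos e2 e1, sq_nonneg ε, sq_nonneg (ε * (-1:ℝ)^s)]
      have hroot' : ∀ s : ℕ, ∃ x : ℝ, s < N + 1 → x ∈ Set.Ioo (t (s+1)) (t s) ∧ p.eval x = 0 := by
        intro s
        by_cases hs : s < N + 1
        · obtain ⟨x, hx, hx0⟩ := hroot s hs; exact ⟨x, fun _ => ⟨hx, hx0⟩⟩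
        · exact ⟨0, fun h => absurd h hs⟩
      choose r hr using hroot'
      have hanti : ∀ a b : ℕ, a < b → b < N + 1 → r b < r a := by
        intro a b hab hbN
        have hra := (hr a (by omega)).1
        have hrb := (hr b hbN).1
        have : t b ≤ t (a+1) := by
          rcases eq_or_lt_of_le (show a + 1 ≤ b by omega) with h | h
          · rw [h]
          · exact (ht (a+1) b h (by omega)).le
        have := hrb.2; have := hra.1
        linarith
      have hinj : Set.InjOn r (Finset.range (N+1) : Set ℕ) := by
        intro a ha b hb hab
        simp only [Finset.coe_range, Set.mem_Iio] at ha hb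
        by_contra hne
        rcases lt_or_gt_of_ne hne with h | h
        · exact absurd hab (hanti a b h hb).ne'
        · exact absurd hab (hanti b a h ha).ne
      have hsub : ((Finset.range (N+1)).image r).val ⊆ p.roots := by
        intro x hx
        simp only [Finset.image_val, Multiset.mem_dedup, Multiset.mem_map, Finset.range_val,
          Multiset.mem_range] at hx
        obtain ⟨s, hs, rfl⟩ := hx
        rw [Polynomial.mem_roots hp]
        exact (hr s hs).2
      have := Polynomial.card_le_degree_of_subset_roots hsub
      have hcard : ((Finset.range (N+1)).image r).card = N + 1 := by
        rw [Finset.card_image_of_injOn hinj, Finset.card_range]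
      calc N + 1 = ((Finset.range (N+1)).image r).card := hcard.symm
        _ ≤ Multiset.card p.roots :=
          Multiset.card_le_card (Finset.val_le_iff_val_subset.2 hsub)

lemma prod_neg_sign {ι : Type*} (T : Finset ι) (g : ι → ℝ) (hg : ∀ s ∈ T, g s ≠ 0) :
    0 < (∏ s ∈ T, g s) * (-1:ℝ)^((T.filter (fun s => g s < 0)).card) := by
  classical
  induction T using Finset.induction_on with
  | empty => simp
  | @insert a T ha ih =>
    have hga : g a ≠ 0 := hg a (Finset.mem_insert_self a T)
    have ih' := ih (fun s hs => hg s (Finset.mem_insert_of_mem hs))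
    rw [Finset.prod_insert ha, Finset.filter_insert]
    by_cases hlt : g a < 0
    · rw [if_pos hlt, Finset.card_insert_of_notMem (by simp [ha]), pow_succ]
      nlinarith [ih']
    · rw [if_neg hlt]
      have : 0 < g a := lt_of_le_of_ne (not_lt.1 hlt) (Ne.symm hga)
      nlinarith [ih']

lemma block_sign {m : ℕ} (hm : 0 < m) (y : Fin m → ℝ) (hy : ∀ i, y i ≠ 0)
    (S : Finset (Fin m))
    (hS : ∀ i : Fin m, i ∈ S ↔ ∃ h : (i:ℕ)+1 < m, y i * y ⟨(i:ℕ)+1, h⟩ < 0) :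
    ∀ i : Fin m, 0 < y ⟨0, hm⟩ * y i * (-1:ℝ)^((S.filter (fun x => x < i)).card) := by
  classical
  suffices H : ∀ c : ℕ, ∀ h : c < m,
      0 < y ⟨0, hm⟩ * y ⟨c, h⟩ * (-1:ℝ)^((S.filter (fun x => x < ⟨c, h⟩)).card) by
    intro i; have := H i i.isLt; simpa using this
  intro c
  induction c with
  | zero =>
    intro h
    have : S.filter (fun x => x < (⟨0, h⟩ : Fin m)) = ∅ := by
      apply Finset.filter_eq_empty_iff.2
      intro x _; simp [Fin.lt_def]
    rw [this]
    simpa using mul_pos (mul_self_pos.2 (hy ⟨0, hm⟩)) one_pos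
  | succ c ihc =>
    intro h
    have hc : c < m := by omega
    have ih := ihc hc
    have hsplit : (S.filter (fun x => x < (⟨c+1, h⟩ : Fin m))).card
        = (S.filter (fun x => x < (⟨c, hc⟩ : Fin m))).card
          + (if (⟨c, hc⟩ : Fin m) ∈ S then 1 else 0) := by
      have hset : S.filter (fun x => x < (⟨c+1, h⟩ : Fin m))
          = (S.filter (fun x => x < (⟨c, hc⟩ : Fin m))) ∪ (S.filter (fun x => x = ⟨c, hc⟩)) := by
        rw [← Finset.filter_or]
        apply Finset.filter_congr
        intro x _
        simp only [Fin.lt_def, Fin.ext_iff, eq_iff_iff]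
        omega
      rw [hset, Finset.card_union_of_disjoint, Finset.filter_eq']
      · split <;> simp
      · rw [Finset.disjoint_left]
        intro x hx1 hx2
        simp only [Finset.mem_filter] at hx1 hx2
        rw [hx2.2] at hx1
        exact lt_irrefl _ hx1.2
    rw [hsplit]
    by_cases hmem : (⟨c, hc⟩ : Fin m) ∈ S
    · rw [if_pos hmem]
      obtain ⟨h', hneg⟩ := (hS _).1 hmem
      have hneg : y ⟨c, hc⟩ * y ⟨c+1, h⟩ < 0 := by
        convert hneg using 3
      rw [pow_succ]
      nlinarith [ih, mul_pos ih (neg_pos.2 hneg), sq_nonneg (y ⟨c, hc⟩)]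
    · rw [if_neg hmem, add_zero]
      have hge : 0 ≤ y ⟨c, hc⟩ * y ⟨c+1, h⟩ := by
        by_contra hlt
        exact hmem ((hS _).2 ⟨by simpa using h, by push_neg at hlt; convert hlt using 3⟩)
      have hpos : 0 < y ⟨c, hc⟩ * y ⟨c+1, h⟩ :=
        lt_of_le_of_ne hge (Ne.symm (mul_ne_zero (hy _) (hy _)))
      nlinarith [ih, mul_pos ih hpos, sq_nonneg (y ⟨c, hc⟩)]


open Finset in
lemma vCount_eq_card {m : ℕ} (y : Fin m → ℝ) :
    vCount y = (Finset.univ.filter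
      (fun i : Fin m => ∃ h : (i:ℕ)+1 < m, y i * y ⟨(i:ℕ)+1, h⟩ < 0)).card := by
  classical
  rw [vCount, show {i : Fin m | ∃ h : (i : ℕ) + 1 < m, y i * y ⟨(i : ℕ) + 1, h⟩ < 0}
    = ↑(Finset.univ.filter
      (fun i : Fin m => ∃ h : (i:ℕ)+1 < m, y i * y ⟨(i:ℕ)+1, h⟩ < 0)) from by
      ext i; simp]
  exact Set.ncard_coe_finset _

open Finset in
lemma filter_le_orderEmb {m K : ℕ} (S : Finset (Fin m)) (hK : S.card = K) (s : Fin K) :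
    (S.filter (fun x => x ≤ S.orderEmbOfFin hK s)).card = (s:ℕ) + 1 := by
  classical
  set e := S.orderEmbOfFin hK with he
  have himg : S.filter (fun x => x ≤ e s) = (Finset.Iic s).image e := by
    ext x
    simp only [mem_filter, mem_image, mem_Iic]
    constructor
    · rintro ⟨hxS, hxle⟩
      have : x ∈ Set.range e := by rw [he, Finset.range_orderEmbOfFin]; exact hxS
      obtain ⟨t, rfl⟩ := this
      exact ⟨t, e.le_iff_le.1 hxle, rfl⟩
    · rintro ⟨t, hts, rfl⟩
      exact ⟨by rw [he]; exact Finset.orderEmbOfFin_mem S hK t, e.le_iff_le.2 hts⟩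
  rw [himg, Finset.card_image_of_injective _ e.injective, Fin.card_Iic]

open Polynomial Finset in
lemma key_upper {m n : ℕ} (hm : 0 < m) (l : Fin m → ℝ) (hanti : StrictAnti l)
    (p : Polynomial ℝ) (hp : p ≠ 0) (hdeg : p.natDegree ≤ n) (y : Fin m → ℝ)
    (hy : ∀ i, y i ≠ 0) (hconc : ∀ i, 0 ≤ p.eval (l i) * y i) : vCount y ≤ n := by
  classical
  rw [vCount_eq_card]
  set S := Finset.univ.filter
      (fun i : Fin m => ∃ h : (i:ℕ)+1 < m, y i * y ⟨(i:ℕ)+1, h⟩ < 0) with hSdef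
  set K := S.card with hKdef
  rcases Nat.eq_zero_or_pos K with hK0 | hKpos
  · omega
  have hSmem : ∀ i : Fin m, i ∈ S ↔ ∃ h : (i:ℕ)+1 < m, y i * y ⟨(i:ℕ)+1, h⟩ < 0 := by
    intro i; simp [hSdef]
  set e := S.orderEmbOfFin rfl with he
  have hesuc : ∀ s : Fin K, ((e s : Fin m) : ℕ) + 1 < m := by
    intro s
    have := (hSmem (e s)).1 (Finset.orderEmbOfFin_mem S rfl s)
    exact this.choose
  set j : ℕ → Fin m := fun s =>
    if h : s = 0 then ⟨0, hm⟩
    else ⟨((e ⟨min (s-1) (K-1), by omega⟩ : Fin m) : ℕ) + 1, hesuc _⟩ with hj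
  have hjmono : ∀ a b : ℕ, a < b → b ≤ K → (j a : ℕ) < (j b : ℕ) := by
    intro a b hab hbK
    rcases Nat.eq_zero_or_pos a with rfl | ha
    · simp only [hj, dif_pos rfl, dif_neg (by omega : ¬ b = 0)]
      omega
    · simp only [hj, dif_neg (by omega : ¬ a = 0), dif_neg (by omega : ¬ b = 0)]
      have hmin_a : min (a-1) (K-1) = a - 1 := by omega
      have hmin_b : min (b-1) (K-1) = b - 1 := by omega
      have : (⟨min (a-1) (K-1), by omega⟩ : Fin K) < ⟨min (b-1) (K-1), by omega⟩ := by
        simp only [Fin.lt_def]; omega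
      have := e.strictMono this
      simp only [Fin.lt_def] at this
      omega
  -- sign of y at sample points
  have hN : ∀ s : ℕ, s ≤ K → (S.filter (fun x => x < j s)).card = s := by
    intro s hsK
    rcases Nat.eq_zero_or_pos s with rfl | hs
    · simp only [hj, dif_pos rfl]
      rw [Finset.card_eq_zero, Finset.filter_eq_empty_iff]
      intro x _; simp [Fin.lt_def]
    · simp only [hj, dif_neg (by omega : ¬ s = 0)]
      have hmin : min (s-1) (K-1) = s - 1 := by omega
      have hfe : (S.filter (fun x => x < (⟨((e ⟨min (s-1) (K-1), by omega⟩ : Fin m) : ℕ) + 1,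
          hesuc _⟩ : Fin m))) = S.filter (fun x => x ≤ e ⟨min (s-1) (K-1), by omega⟩) := by
        apply Finset.filter_congr
        intro x _
        simp only [Fin.lt_def, Fin.le_def, eq_iff_iff]
        omega
      rw [hfe, filter_le_orderEmb S rfl]
      simp; omega
  set ε := y ⟨0, hm⟩ with hε
  have hsign : ∀ s : ℕ, s ≤ K → 0 < ε * (-1:ℝ)^s * y (j s) := by
    intro s hsK
    have := block_sign hm y hy S hSmem (j s)
    rw [hN s hsK] at this
    nlinarith [this]
  have halt : ∀ s : ℕ, s ≤ K → 0 ≤ ε * (-1:ℝ)^s * p.eval (l (j s)) := by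
    intro s hsK
    have h1 := hsign s hsK
    have h2 := hconc (j s)
    nlinarith [mul_nonneg h2 (le_of_lt h1), sq_nonneg (y (j s)), sq_nonneg (ε * (-1:ℝ)^s)]
  have hK := alt_roots K p hp (fun s => l (j s))
    (fun a b hab hbK => hanti (show j a < j b from hjmono a b hab hbK)) ε
    (hy ⟨0, hm⟩) halt
  calc K ≤ Multiset.card p.roots := hK
    _ ≤ p.natDegree := Polynomial.card_roots' p
    _ ≤ n := hdeg

open Polynomial Finset in
lemma key_lower {m n : ℕ} (hm : 0 < m) (l : Fin m → ℝ) (hanti : StrictAnti l)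
    (ψ z : Fin m → ℝ) (hψ : ∀ i, 0 ≤ ψ i)
    (hortho : ∀ a : ℕ, a < n → ∑ i, l i ^ a * ψ i * z i = 0)
    (i₀ : Fin m) (hψ0 : ψ i₀ ≠ 0) (hz0 : z i₀ ≠ 0)
    (y : Fin m → ℝ) (hy : ∀ i, y i ≠ 0) (hconc : ∀ i, 0 ≤ z i * y i) :
    n ≤ vCount y := by
  classical
  by_contra hcon
  push_neg at hcon
  rw [vCount_eq_card] at hcon
  set S := Finset.univ.filter
      (fun i : Fin m => ∃ h : (i:ℕ)+1 < m, y i * y ⟨(i:ℕ)+1, h⟩ < 0) with hSdef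
  have hSmem : ∀ i : Fin m, i ∈ S ↔ ∃ h : (i:ℕ)+1 < m, y i * y ⟨(i:ℕ)+1, h⟩ < 0 := by
    intro i; simp [hSdef]
  set ε := y ⟨0, hm⟩ with hε
  set r : Fin m → ℝ := fun s => if h : (s:ℕ)+1 < m then (l s + l ⟨(s:ℕ)+1, h⟩)/2 else 0
    with hr
  set q : Polynomial ℝ := C ε * ∏ s ∈ S, (X - C (r s)) with hq
  have hqdeg : q.natDegree < n := by
    calc q.natDegree ≤ (C ε).natDegree + (∏ s ∈ S, (X - C (r s))).natDegree :=
          natDegree_mul_le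
      _ ≤ 0 + ∑ s ∈ S, (X - C (r s)).natDegree := by
          gcongr
          · simp
          · exact natDegree_prod_le S _
      _ ≤ S.card := by
          simp only [zero_add]
          calc ∑ s ∈ S, (X - C (r s)).natDegree ≤ ∑ s ∈ S, 1 := by
                apply Finset.sum_le_sum; intro s _; exact (natDegree_X_sub_C_le _)
            _ = S.card := by simp
      _ < n := hcon
  -- factor signs
  have hfac : ∀ i : Fin m, ∀ s ∈ S, (l i - r s ≠ 0) ∧ (l i - r s < 0 ↔ s < i) := by
    intro i s hsS
    obtain ⟨h1, _⟩ := (hSmem s).1 hsS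
    have hrs : r s = (l s + l ⟨(s:ℕ)+1, h1⟩)/2 := by rw [hr]; simp [dif_pos h1]
    have hlt : l ⟨(s:ℕ)+1, h1⟩ < l s := hanti (by simp [Fin.lt_def])
    by_cases hcase : (s:ℕ) < (i:ℕ)
    · have : l i ≤ l ⟨(s:ℕ)+1, h1⟩ := by
        rcases eq_or_lt_of_le (show (s:ℕ)+1 ≤ (i:ℕ) from hcase) with h | h
        · have : (⟨(s:ℕ)+1, h1⟩ : Fin m) = i := by simp [Fin.ext_iff]; omega
          rw [this]
        · exact (hanti (show (⟨(s:ℕ)+1, h1⟩ : Fin m) < i by simp [Fin.lt_def]; omega)).le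
      constructor
      · rw [hrs]; intro hzero; rw [sub_eq_zero] at hzero; nlinarith
      · rw [hrs]; constructor
        · intro _; exact hcase
        · intro _; nlinarith
    · push_neg at hcase
      have : l s ≤ l i := by
        rcases eq_or_lt_of_le hcase with h | h
        · have : s = i := Fin.ext h.symm
          rw [this]
        · exact (hanti (show i < s from Fin.lt_def.2 h)).le
      constructor
      · rw [hrs]; intro hzero; rw [sub_eq_zero] at hzero; nlinarith
      · rw [hrs]
        constructor
        · intro hneg; nlinarith
        · intro hlt'; exact absurd ((Fin.lt_def).1 hlt') (by omega)
  have hqy : ∀ i : Fin m, 0 < y i * q.eval (l i) := by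
    intro i
    have heval : q.eval (l i) = ε * ∏ s ∈ S, (l i - r s) := by
      rw [hq]; simp [eval_prod]
    have hprod := prod_neg_sign S (fun s => l i - r s)
      (fun s hs => (hfac i s hs).1)
    have hfilter : S.filter (fun s => l i - r s < 0) = S.filter (fun s => s < i) := by
      apply Finset.filter_congr
      intro s hs
      exact (hfac i s hs).2
    rw [hfilter] at hprod
    have hbs := block_sign hm y hy S hSmem i
    rw [heval]
    have hsq : ((-1:ℝ)^((S.filter (fun x => x < i)).card))
        * ((-1:ℝ)^((S.filter (fun x => x < i)).card)) = 1 := by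
      rw [← mul_pow]; norm_num
    nlinarith [mul_pos hprod hbs]
  -- the weighted sum is zero
  have hsum : ∑ i, ψ i * z i * q.eval (l i) = 0 := by
    have hterm : ∀ i : Fin m, ψ i * z i * q.eval (l i)
        = ∑ a ∈ Finset.range n, q.coeff a * (l i ^ a * ψ i * z i) := by
      intro i
      rw [eval_eq_sum_range' hqdeg, Finset.mul_sum]
      apply Finset.sum_congr rfl
      intro a _; ring
    rw [Finset.sum_congr rfl (fun i _ => hterm i), Finset.sum_comm]
    apply Finset.sum_eq_zero
    intro a ha
    rw [← Finset.mul_sum, hortho a (Finset.mem_range.1 ha), mul_zero]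
  -- but it is positive
  have hterm_nonneg : ∀ i : Fin m, 0 ≤ ψ i * z i * q.eval (l i) := by
    intro i
    have h1 := hqy i
    have h2 := hconc i
    have hzq : 0 ≤ z i * q.eval (l i) := by
      nlinarith [mul_nonneg h2 h1.le, mul_self_pos.2 (hy i)]
    have := mul_nonneg (hψ i) hzq
    linarith [this]
  have hterm_pos : 0 < ψ i₀ * z i₀ * q.eval (l i₀) := by
    have h1 := hqy i₀
    have hq0 : q.eval (l i₀) ≠ 0 := by
      intro h0; rw [h0, mul_zero] at h1; exact lt_irrefl _ h1
    have hzq : 0 ≤ z i₀ * q.eval (l i₀) := by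
      nlinarith [mul_nonneg (hconc i₀) h1.le, mul_self_pos.2 (hy i₀)]
    have hzq' : z i₀ * q.eval (l i₀) ≠ 0 := mul_ne_zero hz0 hq0
    have hψpos : 0 < ψ i₀ := lt_of_le_of_ne (hψ i₀) (Ne.symm hψ0)
    have := mul_pos hψpos (lt_of_le_of_ne hzq (Ne.symm hzq'))
    linarith [this]
  have : (0:ℝ) < ∑ i, ψ i * z i * q.eval (l i) := by
    have := Finset.sum_lt_sum (f := fun _ : Fin m => (0:ℝ))
      (g := fun i => ψ i * z i * q.eval (l i))
      (fun i _ => hterm_nonneg i) ⟨i₀, Finset.mem_univ i₀, hterm_pos⟩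
    simpa using this
  rw [hsum] at this
  exact lt_irrefl _ this




open Polynomial in
lemma card_le_natDegree_of_roots {m : ℕ} {p : Polynomial ℝ} (hp : p ≠ 0) {l : Fin m → ℝ}
    (hinj : Function.Injective l) (S : Finset (Fin m)) (hroot : ∀ i ∈ S, p.eval (l i) = 0) :
    S.card ≤ p.natDegree := by
  classical
  have hsub : (S.image l).val ⊆ p.roots := by
    intro x hx
    rw [Finset.mem_val, Finset.mem_image] at hx
    obtain ⟨i, hi, rfl⟩ := hx
    rw [Polynomial.mem_roots hp]
    exact hroot i hi
  calc S.card = (S.image l).card := (Finset.card_image_of_injective S hinj).symm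
    _ ≤ p.natDegree := Polynomial.card_le_degree_of_subset_roots hsub

lemma suppCard_eq {m : ℕ} (ψ : Fin m → ℝ) [DecidablePred (fun i : Fin m => ψ i ≠ 0)] :
    suppCard ψ = (Finset.univ.filter (fun i : Fin m => ψ i ≠ 0)).card := by
  rw [suppCard, show {i : Fin m | ψ i ≠ 0}
    = ↑(Finset.univ.filter (fun i : Fin m => ψ i ≠ 0)) from by ext i; simp]
  exact Set.ncard_coe_finset _

open Polynomial in
lemma bdet_ne_zero {m n : ℕ} (l : Fin m → ℝ) (hpos : ∀ i, 0 < l i) (hanti : StrictAnti l)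
    (ψ : Fin m → ℝ) (hψ : ∀ i, 0 ≤ ψ i) (hcard : n < suppCard ψ) :
    (Bmat l ψ n).det ≠ 0 := by
  classical
  intro hdet
  obtain ⟨v, hv, hBv⟩ := Matrix.exists_mulVec_eq_zero_iff.2 hdet
  rcases Nat.eq_zero_or_pos n with rfl | hn
  · exact hv (funext fun b => b.elim0)
  set g : Fin m → ℝ := fun i => ∑ b : Fin n, v b * l i ^ (b:ℕ) with hg
  have hquad : ∑ i, ψ i * l i * g i ^ 2 = 0 := by
    have key : ∀ i, ψ i * l i * g i ^ 2
        = ∑ a : Fin n, ∑ b : Fin n, v a * (l i ^ (a:ℕ) * ψ i * l i ^ ((b:ℕ)+1)) * v b := by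
      intro i
      rw [sq, hg]
      simp only
      rw [Finset.sum_mul_sum, Finset.mul_sum]
      apply Finset.sum_congr rfl
      intro a _
      rw [Finset.mul_sum]
      apply Finset.sum_congr rfl
      intro b _
      ring
    have hdot : v ⬝ᵥ (Bmat l ψ n *ᵥ v) = ∑ i, ψ i * l i * g i ^ 2 := by
      simp only [dotProduct, Matrix.mulVec, dotProduct, Bmat, Matrix.of_apply]
      have step1 : ∀ a : Fin n,
          v a * ∑ b : Fin n, (∑ i : Fin m, l i ^ (a:ℕ) * ψ i * l i ^ ((b:ℕ)+1)) * v b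
          = ∑ b : Fin n, ∑ i : Fin m, v a * (l i ^ (a:ℕ) * ψ i * l i ^ ((b:ℕ)+1)) * v b := by
        intro a
        rw [Finset.mul_sum]
        apply Finset.sum_congr rfl
        intro b _
        rw [Finset.sum_mul, Finset.mul_sum]
        apply Finset.sum_congr rfl
        intro i _
        ring
      rw [Finset.sum_congr rfl (fun a _ => step1 a)]
      calc ∑ a : Fin n, ∑ b : Fin n, ∑ i : Fin m, v a * (l i ^ (a:ℕ) * ψ i * l i ^ ((b:ℕ)+1)) * v b
          = ∑ a : Fin n, ∑ i : Fin m, ∑ b : Fin n, v a * (l i ^ (a:ℕ) * ψ i * l i ^ ((b:ℕ)+1)) * v b :=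
            Finset.sum_congr rfl (fun a _ => Finset.sum_comm)
        _ = ∑ i : Fin m, ∑ a : Fin n, ∑ b : Fin n, v a * (l i ^ (a:ℕ) * ψ i * l i ^ ((b:ℕ)+1)) * v b :=
            Finset.sum_comm
        _ = ∑ i, ψ i * l i * g i ^ 2 :=
            Finset.sum_congr rfl (fun i _ => (key i).symm)
    rw [hBv] at hdot
    simp at hdot
    exact hdot.symm
  have hterm : ∀ i : Fin m, ψ i ≠ 0 → g i = 0 := by
    intro i hi
    have hnn : ∀ j ∈ (Finset.univ : Finset (Fin m)), 0 ≤ ψ j * l j * g j ^ 2 := by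
      intro j _
      have := mul_nonneg (mul_nonneg (hψ j) (hpos j).le) (sq_nonneg (g j))
      linarith [this]
    have := (Finset.sum_eq_zero_iff_of_nonneg hnn).1 hquad i (Finset.mem_univ i)
    have hψpos : 0 < ψ i := lt_of_le_of_ne (hψ i) (Ne.symm hi)
    have hl := hpos i
    rcases mul_eq_zero.1 this with h | h
    · exact absurd h (by positivity)
    · exact pow_eq_zero_iff (by norm_num) |>.1 h
  set Q : Polynomial ℝ := ∑ b : Fin n, C (v b) * X ^ (b:ℕ) with hQ
  have hQne : Q ≠ 0 := by
    intro h0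
    apply hv
    funext b
    have : Q.coeff (b:ℕ) = v b := by
      rw [hQ, Polynomial.finset_sum_coeff]
      rw [Finset.sum_eq_single b]
      · simp
      · intro c _ hcb
        rw [Polynomial.coeff_C_mul, Polynomial.coeff_X_pow, if_neg (by
          intro h; exact hcb (Fin.ext h.symm)), mul_zero]
      · intro h; exact absurd (Finset.mem_univ b) h
    rw [h0] at this
    simpa using this.symm
  have hQdeg : Q.natDegree ≤ n - 1 := by
    rw [hQ]
    apply Polynomial.natDegree_sum_le_of_forall_le
    intro b _
    exact le_trans (Polynomial.natDegree_C_mul_X_pow_le _ _) (by omega)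
  have hroot : ∀ i ∈ Finset.univ.filter (fun i : Fin m => ψ i ≠ 0), Q.eval (l i) = 0 := by
    intro i hi
    rw [Finset.mem_filter] at hi
    have := hterm i hi.2
    rw [hQ, Polynomial.eval_finset_sum]
    simpa [hg] using this
  have := card_le_natDegree_of_roots hQne hanti.injective _ hroot
  rw [← suppCard_eq] at this
  omega






lemma ortho {m n : ℕ} (l ψ : Fin m → ℝ) (hdet : (Bmat l ψ n).det ≠ 0) (a : Fin n) :
    ∑ i, l i ^ (a:ℕ) * ψ i * zMap l ψ n i = 0 := by
  have hBα : Bmat l ψ n *ᵥ alphaMap l ψ n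
      = fun a : Fin n => ∑ i, l i ^ (a:ℕ) * ψ i := by
    rw [alphaMap, Matrix.mulVec_mulVec, Matrix.mul_nonsing_inv _ (isUnit_iff_ne_zero.2 hdet),
      Matrix.one_mulVec]
  simp only [zMap, omegaMap]
  have expand : ∀ i, l i ^ (a:ℕ) * ψ i * (1 - ∑ j : Fin n, l i ^ ((j:ℕ)+1) * alphaMap l ψ n j)
      = l i ^ (a:ℕ) * ψ i
        - ∑ j : Fin n, (l i ^ (a:ℕ) * ψ i * l i ^ ((j:ℕ)+1)) * alphaMap l ψ n j := by
    intro i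
    rw [mul_sub, mul_one, Finset.mul_sum]
    congr 1
    apply Finset.sum_congr rfl
    intro j _
    ring
  rw [Finset.sum_congr rfl (fun i _ => expand i), Finset.sum_sub_distrib, Finset.sum_comm]
  have hB : ∑ j : Fin n, ∑ i, (l i ^ (a:ℕ) * ψ i * l i ^ ((j:ℕ)+1)) * alphaMap l ψ n j
      = (Bmat l ψ n *ᵥ alphaMap l ψ n) a := by
    simp only [Matrix.mulVec, dotProduct, Bmat, Matrix.of_apply]
    apply Finset.sum_congr rfl
    intro j _
    rw [Finset.sum_mul]
  rw [hB, hBα]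
  simp

open Polynomial in
lemma zPoly {m n : ℕ} (l ψ : Fin m → ℝ) :
    ∃ p : Polynomial ℝ, p ≠ 0 ∧ p.natDegree ≤ n ∧ ∀ i, zMap l ψ n i = p.eval (l i) := by
  refine ⟨C 1 - ∑ j : Fin n, C (alphaMap l ψ n j) * X ^ ((j:ℕ)+1), ?_, ?_, ?_⟩
  · intro h0
    have := congrArg (Polynomial.eval 0) h0
    simp [Polynomial.eval_finset_sum] at this
  · apply le_trans (Polynomial.natDegree_sub_le _ _)
    simp only [Polynomial.natDegree_C]
    rw [max_le_iff]
    constructor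
    · omega
    · apply Polynomial.natDegree_sum_le_of_forall_le
      intro j _
      exact le_trans (Polynomial.natDegree_C_mul_X_pow_le _ _) (by omega)
  · intro i
    simp only [zMap, omegaMap, Polynomial.eval_sub, Polynomial.eval_C,
      Polynomial.eval_finset_sum, Polynomial.eval_mul, Polynomial.eval_pow, Polynomial.eval_X]
    congr 1
    apply Finset.sum_congr rfl
    intro j _
    ring

theorem stmt12 {m n : ℕ} (hnm : n < m) (l : Fin m → ℝ) (hpos : ∀ i, 0 < l i)
    (hanti : StrictAnti l) (ψ : Fin m → ℝ) (hψ : ∀ i, 0 ≤ ψ i)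
    (hcard : n < suppCard ψ) :
    vMax (zMap l ψ n) ≤ n ∧
      (vMin (zMap l ψ n) = n - 1 ∨ vMin (zMap l ψ n) = n) ∧
      (zMap l ψ n ⟨0, by omega⟩ ≠ 0 → zMap l ψ n ⟨m - 1, by omega⟩ ≠ 0 →
        vMin (zMap l ψ n) = n) := by
  classical
  have hm : 0 < m := by omega
  obtain ⟨p, hp, hdeg, hz⟩ := zPoly (n := n) l ψ
  have hdet := bdet_ne_zero l hpos hanti ψ hψ hcard
  have hortho : ∀ a : ℕ, a < n → ∑ i, l i ^ a * ψ i * zMap l ψ n i = 0 :=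
    fun a ha => ortho l ψ hdet ⟨a, ha⟩
  have hex : ∃ i₀, ψ i₀ ≠ 0 ∧ zMap l ψ n i₀ ≠ 0 := by
    by_contra hno
    push_neg at hno
    have hroots : ∀ i ∈ Finset.univ.filter (fun i : Fin m => ψ i ≠ 0), p.eval (l i) = 0 := by
      intro i hi
      rw [← hz]
      exact hno i (Finset.mem_filter.1 hi).2
    have := card_le_natDegree_of_roots hp hanti.injective _ hroots
    rw [← suppCard_eq] at this
    omega
  obtain ⟨i₀, hψ0, hz0⟩ := hex
  have hupper : ∀ k ∈ {k | ∃ y : Fin m → ℝ, (∀ i, y i ≠ 0) ∧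
      (∀ i, 0 ≤ zMap l ψ n i * y i) ∧ vCount y = k}, k ≤ n := by
    rintro k ⟨y, hy, hc, rfl⟩
    exact key_upper hm l hanti p hp hdeg y hy (fun i => by rw [← hz]; exact hc i)
  have hlower : ∀ k ∈ {k | ∃ y : Fin m → ℝ, (∀ i, y i ≠ 0) ∧
      (∀ i, 0 ≤ zMap l ψ n i * y i) ∧ vCount y = k}, n ≤ k := by
    rintro k ⟨y, hy, hc, rfl⟩
    exact key_lower hm l hanti ψ (zMap l ψ n) hψ hortho i₀ hψ0 hz0 y hy hc
  set y₀ : Fin m → ℝ := fun i => if zMap l ψ n i = 0 then 1 else zMap l ψ n i with hy₀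
  have hy₀ne : ∀ i, y₀ i ≠ 0 := by
    intro i
    show (if zMap l ψ n i = 0 then (1:ℝ) else zMap l ψ n i) ≠ 0
    by_cases h : zMap l ψ n i = 0
    · rw [if_pos h]; norm_num
    · rw [if_neg h]; exact h
  have hy₀c : ∀ i, 0 ≤ zMap l ψ n i * y₀ i := by
    intro i
    show 0 ≤ zMap l ψ n i * (if zMap l ψ n i = 0 then (1:ℝ) else zMap l ψ n i)
    by_cases h : zMap l ψ n i = 0
    · rw [h]; simp
    · rw [if_neg h]; exact mul_self_nonneg _
  have hmem : vCount y₀ ∈ {k | ∃ y : Fin m → ℝ, (∀ i, y i ≠ 0) ∧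
      (∀ i, 0 ≤ zMap l ψ n i * y i) ∧ vCount y = k} := ⟨y₀, hy₀ne, hy₀c, rfl⟩
  have hne : {k | ∃ y : Fin m → ℝ, (∀ i, y i ≠ 0) ∧
      (∀ i, 0 ≤ zMap l ψ n i * y i) ∧ vCount y = k}.Nonempty := ⟨vCount y₀, hmem⟩
  have hmax : vMax (zMap l ψ n) ≤ n := csSup_le hne hupper
  have hmin : vMin (zMap l ψ n) = n := by
    apply le_antisymm
    · exact le_trans (Nat.sInf_le hmem) (hupper _ hmem)
    · exact le_csInf hne hlower
  exact ⟨hmax, Or.inr hmin, fun _ _ => hmin⟩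
end

section
/- Suppose y = S_τ y_τ has cardinality exactly n with support τ (so the PLS projection P = Λ K (Kᵀ Λ K)⁻¹ Kᵀ satisfies P = S_τ S_τᵀ and the OLS solution is reached). Then the GDoF estimator satisfies \widehat{GDoF} = tr(Ω + 2 S_τ S_τᵀ (I − Ω)) = n + ∑_{i∉τ} ω_i, where Ω = diag(ω) and ω_i = 1 − ∏_{j∈τ}(1 − λ_i/λ_j). Consequently, if n is even, τ = {m−n+1,...,m}, and c = λ_{m−n}/λ_{m−n+1} > 2, then \widehat{GDoF} < n. -/
open Finset Matrix

theorem stmt16 {m n : ℕ} (l : Fin m → ℝ) (hpos : ∀ i, 0 < l i) (hanti : StrictAnti l)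
    (τ : Finset (Fin m)) (hτ : τ.card = n)
    (ω : Fin m → ℝ) (hω : ω = fun i => 1 - ∏ j ∈ τ, (1 - l i / l j))
    (P : Matrix (Fin m) (Fin m) ℝ)
    (hP : P = Matrix.of fun i j => if i = j ∧ i ∈ τ then (1 : ℝ) else 0) :
    Matrix.trace (Matrix.diagonal ω + (2 : ℝ) • (P * (1 - Matrix.diagonal ω))) =
        (n : ℝ) + ∑ i ∈ τᶜ, ω i ∧
      (∀ (hn : 0 < n) (hnm : n < m), Even n →
        τ = Finset.univ.filter (fun i : Fin m => m - n ≤ (i : ℕ)) →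
        2 < l ⟨m - n - 1, by omega⟩ / l ⟨m - n, by omega⟩ →
        Matrix.trace (Matrix.diagonal ω + (2 : ℝ) • (P * (1 - Matrix.diagonal ω))) <
          (n : ℝ)) := by
  have hl0 : ∀ i, l i ≠ 0 := fun i => (hpos i).ne'
  have hωτ : ∀ i ∈ τ, ω i = 1 := by
    intro i hi
    simp only [hω]
    rw [Finset.prod_eq_zero hi (by rw [div_self (hl0 i)]; ring)]
    ring
  have hPdiag : P = Matrix.diagonal (fun i => if i ∈ τ then (1:ℝ) else 0) := by
    subst hP
    ext i j
    by_cases h : i = j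
    · subst h; simp [Matrix.diagonal]
    · simp [Matrix.diagonal, h]
  have hsub : (1 - Matrix.diagonal ω : Matrix (Fin m) (Fin m) ℝ)
      = Matrix.diagonal (fun i => 1 - ω i) := by
    rw [← Matrix.diagonal_one, ← Matrix.diagonal_sub]
  have hT : Matrix.trace (Matrix.diagonal ω + (2 : ℝ) • (P * (1 - Matrix.diagonal ω)))
      = (n : ℝ) + ∑ i ∈ τᶜ, ω i := by
    rw [hPdiag, hsub, Matrix.diagonal_mul_diagonal, Matrix.trace_add, Matrix.trace_smul,
      Matrix.trace_diagonal, Matrix.trace_diagonal]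
    have h2 : ∑ i, (if i ∈ τ then (1:ℝ) else 0) * (1 - ω i) = 0 := by
      apply Finset.sum_eq_zero
      intro i _
      by_cases hi : i ∈ τ
      · simp [hi, hωτ i hi]
      · simp [hi]
    rw [h2]
    rw [← Finset.sum_add_sum_compl τ ω]
    have h3 : ∑ i ∈ τ, ω i = (n : ℝ) := by
      rw [Finset.sum_congr rfl hωτ]
      simp [hτ]
    rw [h3]
    simp
  refine ⟨hT, ?_⟩
  intro hn hnm heven hτeq hc
  rw [hT]
  have hsum : ∑ i ∈ τᶜ, ω i < 0 := by
    apply Finset.sum_neg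
    · intro i hi
      have hiv : (i : ℕ) < m - n := by
        rw [hτeq] at hi
        simp at hi
        omega
      -- ω i = 1 - ∏ < 0
      have hprod : ∏ j ∈ τ, (1 - l i / l j) = ∏ j ∈ τ, (l i / l j - 1) := by
        have : ∀ j ∈ τ, (1 - l i / l j) = (-1) * (l i / l j - 1) := by
          intro j _; ring
        rw [Finset.prod_congr rfl this, Finset.prod_mul_distrib, Finset.prod_const, hτ,
          heven.neg_one_pow, one_mul]
      have hfac : ∀ j ∈ τ, 1 < l i / l j - 1 := by
        intro j hj
        have hjv : m - n ≤ (j : ℕ) := by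
          rw [hτeq] at hj; simpa using hj
        have hli : l ⟨m - n - 1, by omega⟩ ≤ l i := by
          apply hanti.antitone
          rw [Fin.le_def]
          show (i : ℕ) ≤ m - n - 1
          omega
        have hlj : l j ≤ l ⟨m - n, by omega⟩ := by
          apply hanti.antitone
          rw [Fin.le_def]
          exact hjv
        have : 2 < l i / l j := by
          calc (2:ℝ) < l ⟨m - n - 1, by omega⟩ / l ⟨m - n, by omega⟩ := hc
            _ ≤ l i / l j := by
              apply div_le_div₀ (le_of_lt (hpos i)) hli (hpos j) hlj
        linarith
      have hτne : τ.Nonempty := Finset.card_pos.mp (by omega)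
      have : 1 < ∏ j ∈ τ, (l i / l j - 1) := by
        calc (1:ℝ) = ∏ _j ∈ τ, (1:ℝ) := by rw [Finset.prod_const_one]
          _ < ∏ j ∈ τ, (l i / l j - 1) :=
            Finset.prod_lt_prod_of_nonempty (fun j _ => one_pos)
              (fun j hj => hfac j hj) hτne
      rw [hω]
      simp only
      rw [hprod]
      linarith
    · -- τᶜ nonempty
      refine ⟨⟨0, by omega⟩, ?_⟩
      rw [hτeq]
      simp
      omega
  linarith
end
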